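/- Let f, g be characteristic functions with f^n = g^n for an integer n ≥ 2, and suppose S_f has finitely many connected components E_{-k},…,E_0,…,E_k with E_{-j} = -E_j and 0 ∈ E₀. Then there exist integers m_1,…,m_k ∈ {0,…,n-1} such that g(x) = f(x) for x ∈ E₀, g(x) = e^{2πi m_j/n} f(x) for x ∈ E_j (j = 1,…,k), and g(x) = e^{-2πi m_j/n} f(x) for x ∈ E_{-j} (j = 1,…,k). -/

import Mathlib

/-!
On `S_f` the ratio `g / f` is continuous and takes values in the finite set of
`n`-th roots of unity, so it is constant on each connected component. It equals `1` at `0`,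
and since characteristic functions satisfy `φ(-x) = conj (φ x)`, the constant on `E_{-j}` is
the conjugate of the one on `E_j`.
-/

open MeasureTheory Set

/-- The characteristic function of a measure `μ` on `ℝ`: `x ↦ ∫ e^{ixt} dμ(t)`. -/
noncomputable def charFunOf (μ : Measure ℝ) : ℝ → ℂ :=
  fun x => ∫ t, Complex.exp (x * t * Complex.I) ∂μ

/-- `f` is the characteristic function of some probability measure on `ℝ`. -/
def IsCharFun (f : ℝ → ℂ) : Prop :=
  ∃ μ : Measure ℝ, IsProbabilityMeasure μ ∧ f = charFunOf μ

open ComplexConjugate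

lemma charFunOf_eq_charFun (μ : Measure ℝ) : charFunOf μ = charFun μ :=
  funext fun x => (charFun_apply_real x).symm

namespace IsCharFun

variable {f : ℝ → ℂ}

lemma continuous (hf : IsCharFun f) : Continuous f := by
  obtain ⟨μ, _, rfl⟩ := hf
  rw [charFunOf_eq_charFun]
  exact continuous_charFun

lemma map_zero (hf : IsCharFun f) : f 0 = 1 := by
  obtain ⟨μ, _, rfl⟩ := hf
  simp [charFunOf_eq_charFun]

lemma map_neg (hf : IsCharFun f) (x : ℝ) : f (-x) = conj (f x) := by
  obtain ⟨μ, _, rfl⟩ := hf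
  simp [charFunOf_eq_charFun]

lemma eqOn_neg_of_eqOn_mul {g : ℝ → ℂ} (hf : IsCharFun f) (hg : IsCharFun g) {s : Set ℝ}
    {c : ℂ} (h : EqOn g (fun x => c * f x) s) : EqOn g (fun x => conj c * f x) (-s) := by
  intro x hx
  simpa only [← hf.map_neg, ← hg.map_neg, neg_neg, map_mul] using
    congrArg conj (h (mem_neg.mp hx))

end IsCharFun

theorem IsPreconnected.exists_pow_eq_one_eqOn_mul {X 𝕜 : Type*} [TopologicalSpace X]
    [NormedField 𝕜] {s : Set X} {f g : X → 𝕜} {n : ℕ} (hs : IsPreconnected s)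
    (hf : ContinuousOn f s) (hg : ContinuousOn g s) (hf0 : ∀ x ∈ s, f x ≠ 0) (hn : n ≠ 0)
    (hpow : ∀ x ∈ s, f x ^ n = g x ^ n) :
    ∃ ζ : 𝕜, ζ ^ n = 1 ∧ EqOn g (fun x => ζ * f x) s := by
  rcases s.eq_empty_or_nonempty with rfl | ⟨x₀, hx₀⟩
  · exact ⟨1, one_pow n, eqOn_empty _ _⟩
  have hroot : ∀ x ∈ s, (g x / f x) ^ n = 1 := fun x hx => by
    rw [div_pow, ← hpow x hx, div_self (pow_ne_zero n (hf0 x hx))]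
  have hconst : ∀ x ∈ s, g x / f x = g x₀ / f x₀ := fun x hx =>
    hs.constant_of_mapsTo (T := (Polynomial.nthRootsFinset n (1 : 𝕜) : Set 𝕜))
      (Finset.finite_toSet _).isDiscrete (hg.div hf hf0)
      (fun x hx => (Polynomial.mem_nthRootsFinset (Nat.pos_of_ne_zero hn) 1).mpr (hroot x hx))
      hx hx₀
  refine ⟨g x₀ / f x₀, hroot x₀ hx₀, fun x hx => ?_⟩
  dsimp only
  rw [← hconst x hx, div_mul_cancel₀ _ (hf0 x hx)]

theorem Complex.exists_lt_eq_exp_of_pow_eq_one {ζ : ℂ} {n : ℕ} (hn : n ≠ 0) (hζ : ζ ^ n = 1) :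
    ∃ m < n, ζ = Complex.exp (2 * Real.pi * m / n * Complex.I) := by
  have : NeZero n := ⟨hn⟩
  obtain ⟨m, hm, rfl⟩ := (Complex.isPrimitiveRoot_exp n hn).eq_pow_of_pow_eq_one hζ
  refine ⟨m, hm, ?_⟩
  rw [← Complex.exp_nat_mul]
  ring_nf

theorem isPreconnected_of_forall_eq_connectedComponentIn {X : Type*} [TopologicalSpace X]
    {s t : Set X} (h : ∀ x ∈ t, t = connectedComponentIn s x) : IsPreconnected t := by
  rcases t.eq_empty_or_nonempty with rfl | ⟨x, hx⟩
  · exact isPreconnected_empty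
  · exact h x hx ▸ isPreconnected_connectedComponentIn

theorem subset_of_forall_eq_connectedComponentIn {X : Type*} [TopologicalSpace X]
    {s t : Set X} (h : ∀ x ∈ t, t = connectedComponentIn s x) : t ⊆ s := fun x hx =>
  connectedComponentIn_subset s x (h x hx ▸ hx)

theorem stmt7_general (f g : ℝ → ℂ) (hf : IsCharFun f) (hg : IsCharFun g)
    (n : ℕ) (hn : 2 ≤ n) (hpow : ∀ x, f x ^ n = g x ^ n)
    (k : ℕ) (E : ℤ → Set ℝ)
    (hcomp : ∀ j ∈ Set.Icc (-(k : ℤ)) (k : ℤ), ∀ x ∈ E j,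
      E j = connectedComponentIn {y : ℝ | f y ≠ 0} x)
    (hsym : ∀ j : ℤ, E (-j) = -(E j))
    (h0 : (0 : ℝ) ∈ E 0) :
    ∃ m : ℤ → ℕ, (∀ j ∈ Set.Icc (1 : ℤ) (k : ℤ), m j < n) ∧
      (∀ x ∈ E 0, g x = f x) ∧
      (∀ j ∈ Set.Icc (1 : ℤ) (k : ℤ), ∀ x ∈ E j,
        g x = Complex.exp (2 * Real.pi * (m j) / n * Complex.I) * f x) ∧
      (∀ j ∈ Set.Icc (1 : ℤ) (k : ℤ), ∀ x ∈ E (-j),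
        g x = Complex.exp (-(2 * Real.pi * (m j) / n) * Complex.I) * f x) := by
  have hn0 : n ≠ 0 := by omega
  have phase : ∀ j ∈ Set.Icc (-(k : ℤ)) (k : ℤ),
      ∃ ζ : ℂ, ζ ^ n = 1 ∧ EqOn g (fun x => ζ * f x) (E j) := fun j hj =>
    (isPreconnected_of_forall_eq_connectedComponentIn (hcomp j hj)).exists_pow_eq_one_eqOn_mul
      hf.continuous.continuousOn hg.continuous.continuousOn
      (subset_of_forall_eq_connectedComponentIn (hcomp j hj)) hn0 fun x _ => hpow x
  have hE0 : ∀ x ∈ E 0, g x = f x := by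
    obtain ⟨ζ, -, hζ⟩ := phase 0 (by simp)
    have hζ1 : ζ = 1 := by simpa [hf.map_zero, hg.map_zero] using (hζ h0).symm
    exact fun x hx => by simpa [hζ1] using hζ hx
  have hpos : ∀ j ∈ Set.Icc (1 : ℤ) (k : ℤ), ∃ m < n,
      EqOn g (fun x => Complex.exp (2 * Real.pi * m / n * Complex.I) * f x) (E j) := by
    intro j hj
    obtain ⟨ζ, hζn, hζ⟩ := phase j ⟨by linarith [hj.1], hj.2⟩
    obtain ⟨m, hm, rfl⟩ := Complex.exists_lt_eq_exp_of_pow_eq_one hn0 hζn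
    exact ⟨m, hm, hζ⟩
  choose! m hmn hm using hpos
  refine ⟨m, hmn, hE0, hm, fun j hj x hx => ?_⟩
  rw [hsym] at hx
  have hconj : conj (Complex.exp (2 * Real.pi * m j / n * Complex.I)) =
      Complex.exp (-(2 * Real.pi * m j / n) * Complex.I) := by
    rw [← Complex.exp_conj]
    simp [map_ofNat]
  exact hconj ▸ hf.eqOn_neg_of_eqOn_mul hg (hm j hj) hx

/-- Structure theorem: if `f^n = g^n` and `S_f` has components `E_{-k}, …, E_k` with
`E_{-j} = -E_j` and `0 ∈ E₀`, then on each `E_j` (`j ≥ 1`), `g = e^{2πi m_j / n} f`,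
with `g = f` on `E₀` and the conjugate phase on `E_{-j}`. -/
theorem stmt7 (f g : ℝ → ℂ) (hf : IsCharFun f) (hg : IsCharFun g)
    (n : ℕ) (hn : 2 ≤ n) (hpow : ∀ x, f x ^ n = g x ^ n)
    (k : ℕ) (E : ℤ → Set ℝ)
    (hunion : {x : ℝ | f x ≠ 0} = ⋃ j ∈ Set.Icc (-(k : ℤ)) (k : ℤ), E j)
    (hdisj : ∀ i ∈ Set.Icc (-(k : ℤ)) (k : ℤ), ∀ j ∈ Set.Icc (-(k : ℤ)) (k : ℤ),
      i ≠ j → Disjoint (E i) (E j))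
    (hcomp : ∀ j ∈ Set.Icc (-(k : ℤ)) (k : ℤ), ∀ x ∈ E j,
      E j = connectedComponentIn {y : ℝ | f y ≠ 0} x)
    (hsym : ∀ j : ℤ, E (-j) = -(E j))
    (h0 : (0 : ℝ) ∈ E 0) :
    ∃ m : ℤ → ℕ, (∀ j ∈ Set.Icc (1 : ℤ) (k : ℤ), m j < n) ∧
      (∀ x ∈ E 0, g x = f x) ∧
      (∀ j ∈ Set.Icc (1 : ℤ) (k : ℤ), ∀ x ∈ E j,
        g x = Complex.exp (2 * Real.pi * (m j) / n * Complex.I) * f x) ∧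
      (∀ j ∈ Set.Icc (1 : ℤ) (k : ℤ), ∀ x ∈ E (-j),
        g x = Complex.exp (-(2 * Real.pi * (m j) / n) * Complex.I) * f x) :=
  stmt7_general f g hf hg n hn hpow k E hcomp hsym h0
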